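/- Calibrated Jury Theorem: under the one-coin model with equal priors P(Y=+1) = P(Y=−1) = 1/2, conditionally independent votes X_k ∈ {−1,+1} with accuracies p_k ∈ (0,1)\{1/2}, the weighted-majority rule δ(x) = sign(Σ_k α_k x_k) with weights α_k = log(p_k/(1−p_k)) (arbitrary tie-breaking at zero) satisfies P(δ(X) ≠ Y) ≤ (1/2)·exp(−Σ_k C_k), where C_k = −(1/2)·log(1 − (2p_k − 1)²). -/

import Mathlib

/-- Class-conditional likelihood of the vote vector `x` given label `y` (`true = +1`). -/
noncomputable def voteLik {K : ℕ} (p : Fin K → ℝ) (y : Bool) (x : Fin K → Bool) : ℝ :=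
  ∏ k, if x k = y then p k else 1 - p k

/-- Real encoding of a ±1 vote. -/
def pm (b : Bool) : ℝ := if b then 1 else -1

/-!
The Bayes error with equal priors is `(1/2) Σ_x min(L⁺(x), L⁻(x))`, and the weighted-majority rule
is exactly the likelihood-ratio test, since its score `Σ_k α_k x_k` is `log L⁺(x) - log L⁻(x)`.
Bounding the minimum by the geometric mean `√(L⁺(x) L⁻(x))` (Bhattacharyya) leaves a quantity that
no longer depends on `x`: it is `∏_k √(p_k (1 - p_k))`, and summing over the `2^K` vote vectors
gives `∏_k 2 √(p_k (1 - p_k)) = ∏_k √(1 - (2 p_k - 1)²) = exp (-Σ_k C_k)`.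
-/

open Finset Real

lemma sum_mul_ite_eq_zero_le_sqrt {L : Bool → ℝ} (hL : ∀ y, 0 ≤ L y) {b : Bool}
    (hb : L (!b) ≤ L b) :
    ∑ y, L y * (if b = y then 0 else 1) ≤ √(L true * L false) := by
  apply le_sqrt_of_sq_le
  cases b <;> simp only [Bool.not_false, Bool.not_true] at hb <;>
    simp <;> nlinarith [hL true, hL false]

section VoteLik

variable {K : ℕ} {p : Fin K → ℝ}

lemma voteLik_pos (hp : ∀ k, p k ∈ Set.Ioo (0 : ℝ) 1) (y : Bool) (x : Fin K → Bool) :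
    0 < voteLik p y x :=
  prod_pos fun k _ => by
    split_ifs
    · exact (hp k).1
    · exact sub_pos.2 (hp k).2

lemma sum_log_odds_mul_pm_eq (hp : ∀ k, p k ∈ Set.Ioo (0 : ℝ) 1) (x : Fin K → Bool) :
    ∑ k, log (p k / (1 - p k)) * pm (x k) = log (voteLik p true x) - log (voteLik p false x) := by
  have hp0 k : p k ≠ 0 := (hp k).1.ne'
  have hp1 k : 1 - p k ≠ 0 := (sub_pos.2 (hp k).2).ne'
  unfold voteLik
  rw [log_prod fun k _ => by split_ifs <;> simp [hp0, hp1],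
    log_prod fun k _ => by split_ifs <;> simp [hp0, hp1], ← sum_sub_distrib]
  refine sum_congr rfl fun k _ => ?_
  cases x k <;> simp [pm, log_div (hp0 k) (hp1 k)]

lemma voteLik_true_mul_false (x : Fin K → Bool) :
    voteLik p true x * voteLik p false x = ∏ k, p k * (1 - p k) := by
  rw [voteLik, voteLik, ← prod_mul_distrib]
  refine prod_congr rfl fun k _ => ?_
  cases x k <;> simp [mul_comm]

lemma sum_sqrt_voteLik_true_mul_false (hp : ∀ k, p k ∈ Set.Ioo (0 : ℝ) 1) :
    ∑ x : Fin K → Bool, √(voteLik p true x * voteLik p false x) = ∏ k, 2 * √(p k * (1 - p k)) := by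
  have hpq k : 0 ≤ p k * (1 - p k) := mul_nonneg (hp k).1.le (sub_pos.2 (hp k).2).le
  simp only [voteLik_true_mul_false, sum_const, card_univ, Fintype.card_fun, Fintype.card_bool,
    Fintype.card_fin, nsmul_eq_mul]
  rw [sqrt_prod _ fun k _ => hpq k, prod_mul_distrib, prod_const, card_univ, Fintype.card_fin,
    Nat.cast_pow, Nat.cast_two]

lemma voteLik_not_le_of_sign (hp : ∀ k, p k ∈ Set.Ioo (0 : ℝ) 1) {δ : (Fin K → Bool) → Bool}
    (hδpos : ∀ x, 0 < ∑ k, log (p k / (1 - p k)) * pm (x k) → δ x = true)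
    (hδneg : ∀ x, ∑ k, log (p k / (1 - p k)) * pm (x k) < 0 → δ x = false) (x : Fin K → Bool) :
    voteLik p (!δ x) x ≤ voteLik p (δ x) x := by
  have hlog := sum_log_odds_mul_pm_eq hp x
  cases hx : δ x <;> rw [← log_le_log_iff (voteLik_pos hp _ x) (voteLik_pos hp _ x)]
  · have : ¬ 0 < ∑ k, log (p k / (1 - p k)) * pm (x k) := fun h => by simp [hδpos x h] at hx
    simp only [Bool.not_false]
    linarith
  · have : ¬ ∑ k, log (p k / (1 - p k)) * pm (x k) < 0 := fun h => by simp [hδneg x h] at hx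
    simp only [Bool.not_true]
    linarith

end VoteLik

lemma exp_neg_sum_chernoff {ι : Type*} (s : Finset ι) {p : ι → ℝ}
    (hp : ∀ k, p k ∈ Set.Ioo (0 : ℝ) 1) :
    exp (-∑ k ∈ s, -(1/2) * log (1 - (2 * p k - 1)^2)) = ∏ k ∈ s, 2 * √(p k * (1 - p k)) := by
  rw [← sum_neg_distrib, exp_sum]
  refine prod_congr rfl fun k _ => ?_
  have hpq : 0 < p k * (1 - p k) := mul_pos (hp k).1 (sub_pos.2 (hp k).2)
  rw [show 1 - (2 * p k - 1)^2 = 2^2 * (p k * (1 - p k)) by ring, neg_mul, neg_neg,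
    one_div_mul_eq_div, exp_half, exp_log (by positivity), sqrt_mul (by positivity),
    sqrt_sq zero_le_two]

theorem stmt4_general (K : ℕ) (p : Fin K → ℝ) (hp : ∀ k, p k ∈ Set.Ioo (0:ℝ) 1)
    (δ : (Fin K → Bool) → Bool)
    (hδpos : ∀ x, 0 < ∑ k, Real.log (p k / (1 - p k)) * pm (x k) → δ x = true)
    (hδneg : ∀ x, ∑ k, Real.log (p k / (1 - p k)) * pm (x k) < 0 → δ x = false) :
    (∑ y : Bool, ∑ x : Fin K → Bool,
        (1/2) * voteLik p y x * (if δ x = y then 0 else 1))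
      ≤ (1/2) * Real.exp (-∑ k, -(1/2) * Real.log (1 - (2 * p k - 1)^2)) := by
  rw [exp_neg_sum_chernoff _ hp, ← sum_sqrt_voteLik_true_mul_false hp, sum_comm, mul_sum]
  refine sum_le_sum fun x _ => ?_
  simp_rw [mul_assoc, ← mul_sum]
  exact mul_le_mul_of_nonneg_left (sum_mul_ite_eq_zero_le_sqrt (fun y => (voteLik_pos hp y x).le)
    (voteLik_not_le_of_sign hp hδpos hδneg x)) (by norm_num)

theorem stmt4 (K : ℕ) (p : Fin K → ℝ) (hp : ∀ k, p k ∈ Set.Ioo (0:ℝ) 1)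
    (hp' : ∀ k, p k ≠ 1/2)
    (δ : (Fin K → Bool) → Bool)
    (hδpos : ∀ x, 0 < ∑ k, Real.log (p k / (1 - p k)) * pm (x k) → δ x = true)
    (hδneg : ∀ x, ∑ k, Real.log (p k / (1 - p k)) * pm (x k) < 0 → δ x = false) :
    (∑ y : Bool, ∑ x : Fin K → Bool,
        (1/2) * voteLik p y x * (if δ x = y then 0 else 1))
      ≤ (1/2) * Real.exp (-∑ k, -(1/2) * Real.log (1 - (2 * p k - 1)^2)) :=
  stmt4_general K p hp δ hδpos hδneg
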